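/- arXiv:1907.13278 — 2 statements merged into one kernel-verified Lean document; each statement's English description precedes it below -/
import Mathlib

section
/- Let X be a real normed vector space, N a positive integer, h > 0, T = N·h, and φ_0, …, φ_N ∈ X. Then the squared L² distance between the piecewise linear and the piecewise constant interpolants satisfies the exact identity ∫_0^T ‖φ̂(t) − φ̄(t)‖² dt = (h³/3) · Σ_{n=0}^{N−1} ‖(φ_{n+1} − φ_n)/h‖², i.e. it equals (h²/3) times the squared L²(0,T;X) norm of the (piecewise constant) time derivative of φ̂. -/
open MeasureTheory

/-- Exact identity for the squared `L²(0,T;X)` distance between the piecewise linear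
interpolant `φhat` and the piecewise constant interpolant `φbar` of the nodes
`φ 0, …, φ N`, with time step `h` and `T = N * h`. -/
theorem squared_L2_distance_linear_constant_interpolants
    {X : Type*} [NormedAddCommGroup X] [NormedSpace ℝ X]
    (N : ℕ) (hN : 0 < N) (h : ℝ) (hh : 0 < h)
    (φ : ℕ → X) (φhat φbar : ℝ → X)
    (hhat : ∀ n < N, ∀ t ∈ Set.Icc ((n : ℝ) * h) (((n : ℝ) + 1) * h),
      φhat t = φ n + ((t - (n : ℝ) * h) / h) • (φ (n + 1) - φ n))
    (hbar : ∀ n < N, ∀ t ∈ Set.Ioc ((n : ℝ) * h) (((n : ℝ) + 1) * h),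
      φbar t = φ (n + 1)) :
    ∫ t in Set.Ioc (0 : ℝ) ((N : ℝ) * h), ‖φhat t - φbar t‖ ^ 2
      = h ^ 3 / 3 * ∑ n ∈ Finset.range N, ‖(1 / h) • (φ (n + 1) - φ n)‖ ^ 2 := by
  set d : ℕ → X := fun n => φ (n + 1) - φ n with hd
  -- pointwise identity on each subinterval
  have hco : ∀ n : ℕ, n < N → Set.EqOn (fun t => ‖φhat t - φbar t‖ ^ 2)
      (fun t => ((t - ((n : ℝ) + 1) * h) / h) ^ 2 * ‖d n‖ ^ 2)
      (Set.Ioc ((n : ℝ) * h) (((n : ℝ) + 1) * h)) := by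
    intro n hn t ht
    have h1 := hhat n hn t (Set.Ioc_subset_Icc_self ht)
    have h2 := hbar n hn t ht
    simp only
    rw [h1, h2]
    have hφ : φ (n + 1) = φ n + d n := by simp [hd]
    have hkey : φ n + ((t - (n : ℝ) * h) / h) • d n - φ (n + 1)
        = ((t - ((n : ℝ) + 1) * h) / h) • d n := by
      rw [hφ, show ((t - ((n : ℝ) + 1) * h) / h) = ((t - (n : ℝ) * h) / h) - 1 by
        field_simp; ring]
      rw [sub_smul, one_smul]; abel
    rw [hkey, norm_smul, mul_pow, Real.norm_eq_abs, sq_abs]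
  -- integrability on each subinterval
  have hle : ∀ n : ℕ, (n : ℝ) * h ≤ ((n : ℝ) + 1) * h := by
    intro n; nlinarith
  have hcont : ∀ n : ℕ, Continuous
      (fun t : ℝ => ((t - ((n : ℝ) + 1) * h) / h) ^ 2 * ‖d n‖ ^ 2) := by
    intro n; fun_prop
  have hInt : ∀ k : ℕ, k < N → IntervalIntegrable (fun t => ‖φhat t - φbar t‖ ^ 2)
      volume ((k : ℝ) * h) (((k : ℝ) + 1) * h) := by
    intro k hk
    rw [intervalIntegrable_iff_integrableOn_Ioc_of_le (hle k)]
    exact (((hcont k).integrableOn_Ioc)).congr_fun ((hco k hk).symm) measurableSet_Ioc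
  -- value of each subinterval integral
  have hint : ∀ n : ℕ, n < N →
      (∫ t in ((n : ℝ) * h)..(((n : ℝ) + 1) * h), ‖φhat t - φbar t‖ ^ 2)
        = h ^ 3 / 3 * ‖(1 / h) • d n‖ ^ 2 := by
    intro n hn
    rw [intervalIntegral.integral_of_le (hle n),
      setIntegral_congr_fun measurableSet_Ioc (hco n hn),
      ← intervalIntegral.integral_of_le (hle n)]
    have hfun : (fun t : ℝ => ((t - ((n : ℝ) + 1) * h) / h) ^ 2 * ‖d n‖ ^ 2)
        = fun t : ℝ => (‖d n‖ ^ 2 / h ^ 2) * (t - ((n : ℝ) + 1) * h) ^ 2 := by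
      funext t; field_simp
    rw [hfun, intervalIntegral.integral_const_mul]
    rw [intervalIntegral.integral_comp_sub_right (fun x => x ^ 2) (((n : ℝ) + 1) * h)]
    rw [integral_pow]
    rw [norm_smul, Real.norm_eq_abs, abs_of_pos (by positivity : (0:ℝ) < 1 / h)]
    have e1 : (n : ℝ) * h - ((n : ℝ) + 1) * h = -h := by ring
    have e2 : ((n : ℝ) + 1) * h - ((n : ℝ) + 1) * h = 0 := by ring
    rw [e1, e2]
    field_simp
    ring
  -- assemble
  have h0N : (0 : ℝ) ≤ (N : ℝ) * h := by positivity
  rw [← intervalIntegral.integral_of_le h0N]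
  have hadj := intervalIntegral.sum_integral_adjacent_intervals
    (a := fun k : ℕ => (k : ℝ) * h) (μ := volume)
    (f := fun t => ‖φhat t - φbar t‖ ^ 2) (n := N) ?_
  · rw [show ((0 : ℕ) : ℝ) * h = 0 by simp] at hadj
    rw [← hadj, Finset.mul_sum]
    refine Finset.sum_congr rfl fun k hk => ?_
    have hkN : k < N := Finset.mem_range.mp hk
    have : ((k + 1 : ℕ) : ℝ) * h = ((k : ℝ) + 1) * h := by push_cast; ring
    rw [this, hint k hkN]
  · intro k hk
    have : ((k + 1 : ℕ) : ℝ) * h = ((k : ℝ) + 1) * h := by push_cast; ring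
    simpa [this] using hInt k hk
end

section
/- Let X be a real normed vector space, N a positive integer, h > 0, T = N·h, and φ_0, …, φ_N ∈ X. Then the piecewise linear interpolant satisfies ∫_0^T ‖φ̂(t)‖² dt ≤ (h/2)imes‖φ_0‖² + Σ_{n=0}^{N−1} h‖φ_{n+1}‖², i.e. the squared L²(0,T;X) norm of φ̂ is bounded by (h/2)‖φ_0‖² plus the squared L²(0,T;X) norm of the piecewise constant interpolant φ̄. -/
open MeasureTheory

/-- The squared `L²(0,T;X)` norm of the piecewise linear interpolant `φhat` of the nodes
`φ 0, …, φ N` is bounded by `(h/2)·‖φ 0‖² + Σ_{n<N} h·‖φ (n+1)‖²`, i.e. by `(h/2)·‖φ 0‖²`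
plus the squared `L²(0,T;X)` norm of the piecewise constant interpolant. -/
theorem squared_L2_norm_linear_interpolant_le
    {X : Type*} [NormedAddCommGroup X] [NormedSpace ℝ X]
    (N : ℕ) (hN : 0 < N) (h : ℝ) (hh : 0 < h)
    (φ : ℕ → X) (φhat : ℝ → X)
    (hhat : ∀ n < N, ∀ t ∈ Set.Icc ((n : ℝ) * h) (((n : ℝ) + 1) * h),
      φhat t = φ n + ((t - (n : ℝ) * h) / h) • (φ (n + 1) - φ n)) :
    ∫ t in Set.Ioc (0 : ℝ) ((N : ℝ) * h), ‖φhat t‖ ^ 2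
      ≤ h / 2 * ‖φ 0‖ ^ 2 + ∑ n ∈ Finset.range N, h * ‖φ (n + 1)‖ ^ 2 := by
  set a : ℕ → ℝ := fun n => (n : ℝ) * h with ha
  have hle : ∀ n : ℕ, a n ≤ a (n + 1) := by
    intro n
    simp only [ha, Nat.cast_add, Nat.cast_one]
    nlinarith
  -- continuity of the local affine pieces
  have hcont : ∀ n : ℕ, Continuous (fun t : ℝ =>
      ‖φ n + ((t - (n : ℝ) * h) / h) • (φ (n + 1) - φ n)‖ ^ 2) := by
    intro n
    fun_prop
  -- integrability of ‖φhat‖² on each piece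
  have hint : ∀ n < N, IntegrableOn (fun t => ‖φhat t‖ ^ 2)
      (Set.Ioc (a n) (a (n + 1))) := by
    intro n hn
    have : IntegrableOn (fun t : ℝ =>
        ‖φ n + ((t - (n : ℝ) * h) / h) • (φ (n + 1) - φ n)‖ ^ 2)
        (Set.Ioc (a n) (a (n + 1))) := (hcont n).integrableOn_Ioc
    refine this.congr_fun ?_ measurableSet_Ioc
    intro t ht
    have ht' : t ∈ Set.Icc ((n : ℝ) * h) (((n : ℝ) + 1) * h) := by
      refine ⟨le_of_lt ht.1, ?_⟩
      simpa [ha, Nat.cast_add, Nat.cast_one] using ht.2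
    simp only [hhat n hn t ht']
  have hint' : ∀ n < N, IntervalIntegrable (fun t => ‖φhat t‖ ^ 2) volume (a n) (a (n + 1)) := by
    intro n hn
    exact (intervalIntegrable_iff_integrableOn_Ioc_of_le (hle n)).mpr (hint n hn)
  -- step bound
  have step : ∀ n < N, ∫ t in Set.Ioc (a n) (a (n + 1)), ‖φhat t‖ ^ 2
      ≤ h / 2 * ‖φ n‖ ^ 2 + h / 2 * ‖φ (n + 1)‖ ^ 2 := by
    intro n hn
    set A := ‖φ n‖ ^ 2 with hA
    set B := ‖φ (n + 1)‖ ^ 2 with hB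
    set f : ℝ → ℝ := fun t => A + (B - A) / h * (t - (n : ℝ) * h) with hf
    have hfc : Continuous f := by fun_prop
    have hmono : ∫ t in Set.Ioc (a n) (a (n + 1)), ‖φhat t‖ ^ 2
        ≤ ∫ t in Set.Ioc (a n) (a (n + 1)), f t := by
      refine setIntegral_mono_on (hint n hn) (hfc.integrableOn_Ioc) measurableSet_Ioc ?_
      intro t ht
      have ht' : t ∈ Set.Icc ((n : ℝ) * h) (((n : ℝ) + 1) * h) := by
        refine ⟨le_of_lt ht.1, ?_⟩
        simpa [ha, Nat.cast_add, Nat.cast_one] using ht.2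
      rw [hhat n hn t ht']
      set s := (t - (n : ℝ) * h) / h with hs
      have hs0 : 0 ≤ s := by
        apply div_nonneg _ hh.le
        linarith [ht'.1]
      have hs1 : s ≤ 1 := by
        rw [hs, div_le_one hh]
        have := ht'.2
        nlinarith
      have heq : φ n + s • (φ (n + 1) - φ n) = (1 - s) • φ n + s • φ (n + 1) := by
        rw [smul_sub, sub_smul, one_smul]
        abel
      have hnorm : ‖φ n + s • (φ (n + 1) - φ n)‖ ≤ (1 - s) * ‖φ n‖ + s * ‖φ (n + 1)‖ := by
        rw [heq]
        calc ‖(1 - s) • φ n + s • φ (n + 1)‖ ≤ ‖(1 - s) • φ n‖ + ‖s • φ (n + 1)‖ :=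
              norm_add_le _ _
          _ = (1 - s) * ‖φ n‖ + s * ‖φ (n + 1)‖ := by
              rw [norm_smul, norm_smul, Real.norm_of_nonneg (by linarith),
                Real.norm_of_nonneg hs0]
      have h0 : (0:ℝ) ≤ ‖φ n‖ := norm_nonneg _
      have h1 : (0:ℝ) ≤ ‖φ (n + 1)‖ := norm_nonneg _
      have hnn : (0:ℝ) ≤ ‖φ n + s • (φ (n + 1) - φ n)‖ := norm_nonneg _
      have hsq : ‖φ n + s • (φ (n + 1) - φ n)‖ ^ 2
          ≤ ((1 - s) * ‖φ n‖ + s * ‖φ (n + 1)‖) ^ 2 :=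
        pow_le_pow_left₀ hnn hnorm 2
      have hrw : f t = ‖φ n‖ ^ 2 + (‖φ (n + 1)‖ ^ 2 - ‖φ n‖ ^ 2) * s := by
        simp only [hf, hA, hB, hs]; ring
      rw [hrw]
      nlinarith [hsq, mul_nonneg (mul_nonneg hs0 (by linarith : (0:ℝ) ≤ 1 - s))
        (sq_nonneg (‖φ n‖ - ‖φ (n + 1)‖))]
    have hcomp : ∫ t in Set.Ioc (a n) (a (n + 1)), f t = h / 2 * A + h / 2 * B := by
      rw [← intervalIntegral.integral_of_le (hle n)]
      have i1 : IntervalIntegrable (fun _ : ℝ => A) volume (a n) (a (n + 1)) :=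
        intervalIntegrable_const
      have i2 : IntervalIntegrable (fun t : ℝ => (B - A) / h * (t - (n : ℝ) * h))
          volume (a n) (a (n + 1)) := (Continuous.intervalIntegrable (by fun_prop) _ _)
      rw [hf]
      rw [intervalIntegral.integral_add i1 i2, intervalIntegral.integral_const,
        intervalIntegral.integral_const_mul]
      have i3 : IntervalIntegrable (fun t : ℝ => t) volume (a n) (a (n + 1)) :=
        (Continuous.intervalIntegrable (by fun_prop) _ _)
      rw [intervalIntegral.integral_sub i3 intervalIntegrable_const,
        integral_id, intervalIntegral.integral_const]
      simp only [ha, smul_eq_mul, Nat.cast_add, Nat.cast_one]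
      field_simp
      ring
    linarith [hmono, hcomp.le]
  -- sum up
  have hsplit : ∫ t in Set.Ioc (0 : ℝ) ((N : ℝ) * h), ‖φhat t‖ ^ 2
      = ∑ n ∈ Finset.range N, ∫ t in Set.Ioc (a n) (a (n + 1)), ‖φhat t‖ ^ 2 := by
    have := intervalIntegral.sum_integral_adjacent_intervals (a := a) (n := N)
      (f := fun t => ‖φhat t‖ ^ 2) (μ := volume) hint'
    have ha0 : a 0 = 0 := by simp [ha]
    have haN : a N = (N : ℝ) * h := rfl
    rw [ha0, haN] at this
    have h0N : (0 : ℝ) ≤ (N : ℝ) * h := by positivity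
    rw [← intervalIntegral.integral_of_le h0N, ← this]
    refine Finset.sum_congr rfl fun n hn => ?_
    rw [intervalIntegral.integral_of_le (hle n)]
  rw [hsplit]
  calc ∑ n ∈ Finset.range N, ∫ t in Set.Ioc (a n) (a (n + 1)), ‖φhat t‖ ^ 2
      ≤ ∑ n ∈ Finset.range N, (h / 2 * ‖φ n‖ ^ 2 + h / 2 * ‖φ (n + 1)‖ ^ 2) :=
        Finset.sum_le_sum fun n hn => step n (Finset.mem_range.mp hn)
    _ = ∑ n ∈ Finset.range N, h * ‖φ (n + 1)‖ ^ 2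
        + ∑ n ∈ Finset.range N, (h / 2 * ‖φ n‖ ^ 2 - h / 2 * ‖φ (n + 1)‖ ^ 2) := by
        rw [← Finset.sum_add_distrib]
        exact Finset.sum_congr rfl fun n _ => by ring
    _ = ∑ n ∈ Finset.range N, h * ‖φ (n + 1)‖ ^ 2
        + (h / 2 * ‖φ 0‖ ^ 2 - h / 2 * ‖φ N‖ ^ 2) := by
        rw [Finset.sum_range_sub' (fun n => h / 2 * ‖φ n‖ ^ 2) N]
    _ ≤ h / 2 * ‖φ 0‖ ^ 2 + ∑ n ∈ Finset.range N, h * ‖φ (n + 1)‖ ^ 2 := by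
        have : 0 ≤ h / 2 * ‖φ N‖ ^ 2 := by positivity
        linarith
end
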